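/- In the single-bottleneck RBU model, assume c u ∈ [0,1] for all u ≥ 1, s u ≥ d_trans for all u ≥ 1, and d_trans ≤ τ. Then for any packets t < t', if d t ≤ τ, the receiver arrival times satisfy the quantitative bound T t' + y t' ≥ T t + y t + (t' - t) · d_trans; in particular, consecutive packets are delivered at the receiver spaced apart by at least the transmission delay d_trans, so the delivered throughput never exceeds one packet per d_trans time units. -/

import Mathlib

/-!
Once `d t ≤ τ`, no later packet is dropped: the accrued delay is at most `τ` because the spacing
is at least `d_trans`, and cross traffic only moves the delay towards `τ`. Since cross traffic
never lowers the delay below the accrued one, `d (u+1) ≥ d u - s (u+1) + d_trans`, i.e. the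
arrival time `T u + d u` grows by at least `d_trans` per packet.
-/

open Set

lemma add_mul_sub_mem_Icc {a b c : ℝ} (hab : a ≤ b) (hc : c ∈ Icc (0 : ℝ) 1) :
    a + c * (b - a) ∈ Icc a b := by
  obtain ⟨hc0, hc1⟩ := hc
  constructor <;> nlinarith

lemma add_mul_le_of_add_le_succ {f : ℕ → ℝ} {δ : ℝ} {t : ℕ}
    (h : ∀ u, t ≤ u → f u + δ ≤ f (u + 1)) (k : ℕ) : f t + k * δ ≤ f (t + k) := by
  induction k with
  | zero => simp
  | succ k ih =>
    calc f t + ↑(k + 1) * δ = f t + k * δ + δ := by push_cast; ring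
      _ ≤ f (t + k) + δ := by linarith
      _ ≤ f (t + (k + 1)) := h (t + k) (Nat.le_add_right t k)

section RBU

variable {d_trans τ : ℝ} {s c a d : ℕ → ℝ}

lemma accrued_le {dPrev s : ℝ} (hs : d_trans ≤ s) (hτ : d_trans ≤ τ) (hprev : dPrev ≤ τ) :
    d_trans + max (dPrev - s) 0 ≤ τ := by
  have : max (dPrev - s) 0 ≤ τ - d_trans := max_le (by linarith) (by linarith)
  linarith

lemma delay_succ_mem_Icc
    (ha : ∀ t, 1 ≤ t → a t = d_trans + max (d (t - 1) - s t) 0)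
    (hd : ∀ t, 1 ≤ t → d t = a t + c t * (τ - a t))
    (hc : ∀ u, 1 ≤ u → c u ∈ Icc (0 : ℝ) 1)
    (hs_trans : ∀ u, 1 ≤ u → d_trans ≤ s u) (hτ_trans : d_trans ≤ τ)
    {u : ℕ} (hu : d u ≤ τ) : d (u + 1) ∈ Icc (d u - s (u + 1) + d_trans) τ := by
  have ha' : a (u + 1) = d_trans + max (d u - s (u + 1)) 0 := ha (u + 1) u.succ_pos
  have ha_le : a (u + 1) ≤ τ := ha' ▸ accrued_le (hs_trans (u + 1) u.succ_pos) hτ_trans hu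
  have hmix := hd (u + 1) u.succ_pos ▸ add_mul_sub_mem_Icc ha_le (hc (u + 1) u.succ_pos)
  refine ⟨le_trans ?_ hmix.1, hmix.2⟩
  rw [ha']
  linarith [le_max_left (d u - s (u + 1)) 0]

end RBU

theorem rbu_throughput_bound_general
    (d_trans d_prop τ : ℝ)
    (s c a d T y : ℕ → ℝ)
    (ha : ∀ t, 1 ≤ t → a t = d_trans + max (d (t - 1) - s t) 0)
    (hd : ∀ t, 1 ≤ t → d t = a t + c t * (τ - a t))
    (hT : ∀ t, T t = ∑ i ∈ Finset.Icc 1 t, s i)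
    (hy : ∀ t, y t = d t + d_prop)
    (hc : ∀ u, 1 ≤ u → c u ∈ Set.Icc (0 : ℝ) 1)
    (hs_trans : ∀ u, 1 ≤ u → d_trans ≤ s u)
    (hτ_trans : d_trans ≤ τ)
    (t t' : ℕ) (htt' : t < t') (hnodrop : d t ≤ τ) :
    T t' + y t' ≥ T t + y t + ((t' - t : ℕ) : ℝ) * d_trans := by
  have hstep u (hu : d u ≤ τ) := delay_succ_mem_Icc ha hd hc hs_trans hτ_trans hu
  have hnodrop_after : ∀ u, t ≤ u → d u ≤ τ := fun u htu =>
    Nat.le_induction hnodrop (fun v _ hv => (hstep v hv).2) u htu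
  have hT_succ u : T (u + 1) = T u + s (u + 1) := by
    rw [hT, hT, Finset.sum_Icc_succ_top (Nat.le_add_left 1 u)]
  have hspacing : ∀ u, t ≤ u → T u + d u + d_trans ≤ T (u + 1) + d (u + 1) := by
    intro u htu
    linarith [hT_succ u, (hstep u (hnodrop_after u htu)).1]
  obtain ⟨k, rfl⟩ := Nat.exists_eq_add_of_le htt'.le
  rw [Nat.add_sub_cancel_left, hy, hy]
  linarith [add_mul_le_of_add_le_succ hspacing k]

theorem rbu_throughput_bound
    (d_trans d_prop τ : ℝ)
    (hdtrans : 0 < d_trans) (hdprop : 0 < d_prop) (hτ : 0 < τ)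
    (s c a d T y : ℕ → ℝ)
    (hs_pos : ∀ t, 1 ≤ t → 0 < s t)
    (ha : ∀ t, 1 ≤ t → a t = d_trans + max (d (t - 1) - s t) 0)
    (hd : ∀ t, 1 ≤ t → d t = a t + c t * (τ - a t))
    (hT : ∀ t, T t = ∑ i ∈ Finset.Icc 1 t, s i)
    (hy : ∀ t, y t = d t + d_prop)
    (hc : ∀ u, 1 ≤ u → c u ∈ Set.Icc (0 : ℝ) 1)
    (hs_trans : ∀ u, 1 ≤ u → d_trans ≤ s u)
    (hτ_trans : d_trans ≤ τ)
    (t t' : ℕ) (htt' : t < t') (hnodrop : d t ≤ τ) :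
    T t' + y t' ≥ T t + y t + ((t' - t : ℕ) : ℝ) * d_trans :=
  rbu_throughput_bound_general d_trans d_prop τ s c a d T y ha hd hT hy hc hs_trans hτ_trans t t'
    htt' hnodrop
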